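/- Consider a market with finite player set N and item set M, where each valuation v_i : 2^M → ℝ≥0 is monotone, α-submodular (α ≥ 1), and ε-close to a linear valuation ℓ_i. Let 𝓜 be the partition matroid on N×M whose independent sets are those S ⊆ N×M in which each item j ∈ M appears in at most one pair. Let v(S) := Σ_i v_i({j : (i,j) ∈ S}), and let S be a basis of 𝓜 built greedily with respect to v (at each step adding a pair of maximum marginal value among pairs preserving independence). Then the induced allocation (S_i)_{i∈N} with S_i = {j : (i,j) ∈ S} satisfies Σ_i v_i(S_i) ≥ ((1−3ε)/α)·OPT, where OPT is the maximum of Σ_i v_i(T_i) over all allocations (T_i) (families of pairwise disjoint subsets of M). -/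

import Mathlib

/-! Let δ_t be the marginal gain of the t-th greedy step, so the greedy welfare is
W = v(∅) + Σ_t δ_t. Fix a player i and its bundle T_i in a competing allocation, and add the
items of T_i to B = S_i \ T_i in the order in which the greedy run assigned them. When the item j
of step t is added, the current set contains everything player i held at step t, so
α-submodularity and the greedy choice bound its marginal by α·δ_t. Closeness to the linear
valuation turns v_i(B ∪ T_i) − v_i(B) into Σ_{j ∈ T_i} l_ij up to ε·v_i(S_i). Summing over the
players gives OPT ≤ (1+ε)(Σ c_i + Σ_i l_i(T_i)) ≤ (1+ε)(α+ε)·W, and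
(1−3ε)(1+ε)(α+ε) ≤ α. -/

/-- `playerSlice i S = {j : (i,j) ∈ S}`, the items paired with player `i` in `S`. -/
def playerSlice {N M : Type*} [DecidableEq N] [DecidableEq M]
    (i : N) (S : Finset (N × M)) : Finset M :=
  (S.filter (fun p => p.1 = i)).image Prod.snd

/-- Independence in the partition matroid on `N × M`: each item `j ∈ M` appears
in at most one pair. -/
def PartitionIndep {N M : Type*} [DecidableEq N] [DecidableEq M]
    (S : Finset (N × M)) : Prop :=
  ∀ j : M, (S.filter (fun p => p.2 = j)).card ≤ 1

/-- The prefix `{s_1, …, s_{j-1}}` of a finite sequence `s : Fin k → N × M`. -/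
def prefixSet {G : Type*} [DecidableEq G] {k : ℕ} (s : Fin k → G) (j : Fin k) :
    Finset G :=
  (Finset.univ.filter (fun i : Fin k => i < j)).image s

open Finset

def marginal {ι G : Type*} [DecidableEq ι] [AddCommGroup G] (f : Finset ι → G) (j : ι)
    (A : Finset ι) : G :=
  f (insert j A) - f A

theorem sub_empty_eq_sum_marginal {ι G : Type*} [LinearOrder ι] [DecidableEq ι] [AddCommGroup G]
    (f : Finset ι → G) (T : Finset ι) :
    f T - f ∅ = ∑ j ∈ T, marginal f j (T.filter (· < j)) := by
  induction T using Finset.induction_on_max with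
  | empty => simp
  | insert a T hlt ih =>
    have ha : a ∉ T := fun h => lt_irrefl a (hlt a h)
    have hprefix : (insert a T).filter (· < a) = T := by
      rw [filter_insert, if_neg (lt_irrefl a), filter_true_of_mem hlt]
    have hrest : ∀ j ∈ T, (insert a T).filter (· < j) = T.filter (· < j) := fun j hj => by
      rw [filter_insert, if_neg (not_lt.mpr (hlt j hj).le)]
    rw [sum_insert ha, hprefix, sum_congr rfl fun j hj => by rw [hrest j hj], ← ih, marginal]
    abel

theorem sub_empty_eq_sum_marginal_prefixSet {G H : Type*} [DecidableEq G] [AddCommGroup H]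
    (f : Finset G → H) {k : ℕ} (s : Fin k → G) :
    f (univ.image s) - f ∅ = ∑ t, marginal f (s t) (prefixSet s t) := by
  simpa [marginal, image_insert, prefixSet] using
    sub_empty_eq_sum_marginal (fun A => f (A.image s)) univ

theorem sum_le_sub_add_of_close {M : Type*} [DecidableEq M] {u : Finset M → ℝ} {c ε : ℝ}
    {l : M → ℝ} (hε : 0 ≤ ε) (hl : ∀ j, 0 ≤ l j)
    (hclose : ∀ S, c + ∑ j ∈ S, l j ≤ u S ∧ u S ≤ (1 + ε) * (c + ∑ j ∈ S, l j))
    {A B T : Finset M} (hBA : B ⊆ A) (hBT : Disjoint B T) :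
    ∑ j ∈ T, l j ≤ u (B ∪ T) - u B + ε * u A := by
  have hunion := (hclose (B ∪ T)).1
  rw [sum_union hBT] at hunion
  have hB := (hclose B).2
  have hBA' : c + ∑ j ∈ B, l j ≤ u A :=
    (add_le_add_right (sum_le_sum_of_subset_of_nonneg hBA fun j _ _ => hl j) c).trans
      (hclose A).1
  linarith [mul_le_mul_of_nonneg_left hBA' hε]

theorem sum_sum_filter_le_sum {ι N M : Type*} [Fintype ι] [DecidableEq ι] [Fintype N]
    [DecidableEq M] (g : ι → ℝ) (hg : ∀ t, 0 ≤ g t) (key : ι → M) (T : N → Finset M)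
    (hT : ∀ i i', i ≠ i' → Disjoint (T i) (T i')) :
    ∑ i, ∑ t ∈ univ.filter (fun t => key t ∈ T i), g t ≤ ∑ t, g t := by
  rw [← sum_biUnion (t := fun i => univ.filter fun t => key t ∈ T i) fun i _ i' _ hne =>
    disjoint_filter.mpr fun _ _ h h' => disjoint_left.mp (hT i i' hne) h h']
  exact sum_le_univ_sum_of_nonneg hg

theorem one_sub_three_mul_div_mul_le {α ε W O : ℝ} (hα : 1 ≤ α) (hε : 0 ≤ ε) (hW : 0 ≤ W)
    (hO : 0 ≤ O) (h : O ≤ (1 + ε) * (α + ε) * W) : (1 - 3 * ε) / α * O ≤ W := by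
  have hα₀ : 0 < α := by linarith
  rcases le_or_gt (1 - 3 * ε) 0 with hneg | hpos
  · exact (mul_nonpos_of_nonpos_of_nonneg (div_nonpos_of_nonpos_of_nonneg hneg hα₀.le) hO).trans
      hW
  have hcoef : (1 - 3 * ε) * ((1 + ε) * (α + ε)) ≤ α := by nlinarith [mul_nonneg hε hε]
  rw [div_mul_eq_mul_div, div_le_iff₀ hα₀]
  calc (1 - 3 * ε) * O ≤ (1 - 3 * ε) * ((1 + ε) * (α + ε) * W) :=
        mul_le_mul_of_nonneg_left h hpos.le
    _ = (1 - 3 * ε) * ((1 + ε) * (α + ε)) * W := by ring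
    _ ≤ α * W := mul_le_mul_of_nonneg_right hcoef hW
    _ = W * α := mul_comm _ _

section PartitionMatroid

variable {N M : Type*} [DecidableEq N] [DecidableEq M]

theorem mem_playerSlice {i : N} {j : M} {A : Finset (N × M)} :
    j ∈ playerSlice i A ↔ (i, j) ∈ A := by
  simp [playerSlice]

theorem playerSlice_insert_self (i : N) (j : M) (A : Finset (N × M)) :
    playerSlice i (insert (i, j) A) = insert j (playerSlice i A) := by
  ext; simp [mem_playerSlice]

theorem playerSlice_insert_of_ne {i i' : N} (h : i ≠ i') (j : M) (A : Finset (N × M)) :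
    playerSlice i (insert (i', j) A) = playerSlice i A := by
  ext; simp [mem_playerSlice, h]

theorem partitionIndep_iff_injOn {A : Finset (N × M)} :
    PartitionIndep A ↔ Set.InjOn Prod.snd (A : Set (N × M)) := by
  simp only [PartitionIndep, card_le_one, mem_filter, Set.InjOn, mem_coe]
  exact ⟨fun h p hp q hq hpq => h q.2 p ⟨hp, hpq⟩ q ⟨hq, rfl⟩,
    fun h _ p hp q hq => h hp.1 hq.1 (hp.2.trans hq.2.symm)⟩

theorem partitionIndep_insert_iff {A : Finset (N × M)} {q : N × M} (hq : q ∉ A) :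
    PartitionIndep (insert q A) ↔ PartitionIndep A ∧ ∀ p ∈ A, p.2 ≠ q.2 := by
  rw [partitionIndep_iff_injOn, partitionIndep_iff_injOn, coe_insert,
    Set.injOn_insert (mem_coe.not.mpr hq)]
  simp only [Set.mem_image, mem_coe, not_exists, not_and]

def welfare [Fintype N] (v : N → Finset M → ℝ) (A : Finset (N × M)) : ℝ :=
  ∑ i, v i (playerSlice i A)

theorem marginal_welfare [Fintype N] (v : N → Finset M → ℝ) (q : N × M) (A : Finset (N × M)) :
    marginal (welfare v) q A = marginal (v q.1) q.2 (playerSlice q.1 A) := by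
  rw [marginal, welfare, welfare, ← sum_sub_distrib, marginal,
    sum_eq_single q.1 (fun i _ hi => by rw [playerSlice_insert_of_ne hi, sub_self]) (by simp),
    playerSlice_insert_self]

end PartitionMatroid

section Greedy

variable {N M : Type*} [DecidableEq N] [DecidableEq M] {k : ℕ} {s : Fin k → N × M}

theorem mem_prefixSet {t : Fin k} {p : N × M} : p ∈ prefixSet s t ↔ ∃ u < t, s u = p := by
  simp [prefixSet]

theorem snd_injective_of_greedy (hsinj : Function.Injective s)
    (hgIndep : ∀ t, PartitionIndep (insert (s t) (prefixSet s t))) :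
    Function.Injective fun t => (s t).2 := by
  have key : ∀ u t, u < t → (s u).2 ≠ (s t).2 := fun u t hut heq =>
    hut.ne (hsinj (partitionIndep_iff_injOn.mp (hgIndep t)
      (mem_insert_of_mem (mem_prefixSet.mpr ⟨u, hut, rfl⟩)) (mem_insert_self _ _) heq))
  intro u t heq
  rcases lt_trichotomy u t with hut | rfl | htu
  exacts [absurd heq (key u t hut), rfl, absurd heq.symm (key t u htu)]

theorem exists_snd_eq_of_maximal (hsnd : Function.Injective fun t => (s t).2)
    (hSmax : ∀ q, q ∉ univ.image s → ¬ PartitionIndep (insert q (univ.image s)))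
    (i : N) (j : M) : ∃ t, (s t).2 = j := by
  by_contra! hj
  have hfresh : ∀ p ∈ univ.image s, p.2 ≠ j := by
    simpa using hj
  have hij : (i, j) ∉ univ.image s := fun h => hfresh _ h rfl
  refine hSmax (i, j) hij ((partitionIndep_insert_iff hij).mpr ⟨?_, hfresh⟩)
  rw [partitionIndep_iff_injOn, coe_image, coe_univ, Set.image_univ]
  rintro _ ⟨u, rfl⟩ _ ⟨t, rfl⟩ h
  rw [hsnd h]

theorem marginal_le_greedy [Fintype N] (v : N → Finset M → ℝ)
    (hsnd : Function.Injective fun t => (s t).2)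
    (hgIndep : ∀ t, PartitionIndep (insert (s t) (prefixSet s t)))
    (hgMax : ∀ t q, q ∉ prefixSet s t → PartitionIndep (insert q (prefixSet s t)) →
      marginal (welfare v) q (prefixSet s t) ≤ marginal (welfare v) (s t) (prefixSet s t))
    (t : Fin k) (i : N) :
    marginal (v i) (s t).2 (playerSlice i (prefixSet s t)) ≤
      marginal (welfare v) (s t) (prefixSet s t) := by
  have hfresh : ∀ p ∈ prefixSet s t, p.2 ≠ (s t).2 := by
    intro p hp heq
    obtain ⟨u, hut, rfl⟩ := mem_prefixSet.mp hp
    exact hut.ne (hsnd heq)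
  have hnot : ∀ i', (i', (s t).2) ∉ prefixSet s t := fun i' h => hfresh _ h rfl
  have hindep := ((partitionIndep_insert_iff (hnot (s t).1)).mp (hgIndep t)).1
  simpa [marginal_welfare] using
    hgMax t (i, (s t).2) (hnot i) ((partitionIndep_insert_iff (hnot i)).mpr ⟨hindep, hfresh⟩)

theorem playerSlice_prefixSet_subset (i : N) (T : Finset M) (t : Fin k) :
    playerSlice i (prefixSet s t) ⊆ playerSlice i (univ.image s) \ T ∪
      ((univ.filter fun u => (s u).2 ∈ T).filter (· < t)).image fun u => (s u).2 := by
  intro x hx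
  obtain ⟨u, hut, hu⟩ := mem_prefixSet.mp (mem_playerSlice.mp hx)
  by_cases hxT : x ∈ T
  · exact mem_union_right _ (mem_image.mpr ⟨u, by simp [hu, hxT, hut], by simp [hu]⟩)
  · exact mem_union_left _
      (mem_sdiff.mpr ⟨mem_playerSlice.mpr (mem_image.mpr ⟨u, mem_univ u, hu⟩), hxT⟩)

theorem marginal_union_le_sum_greedy [Fintype N] (v : N → Finset M → ℝ)
    (hsnd : Function.Injective fun t => (s t).2)
    (hgIndep : ∀ t, PartitionIndep (insert (s t) (prefixSet s t)))
    (hgMax : ∀ t q, q ∉ prefixSet s t → PartitionIndep (insert q (prefixSet s t)) →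
      marginal (welfare v) q (prefixSet s t) ≤ marginal (welfare v) (s t) (prefixSet s t))
    (hcover : ∀ j, ∃ t, (s t).2 = j) (i : N) {α : ℝ} (hα : 0 ≤ α)
    (hsub : ∀ S T : Finset M, S ⊆ T → ∀ j ∉ T, marginal (v i) j T ≤ α * marginal (v i) j S)
    (T : Finset M) :
    v i (playerSlice i (univ.image s) \ T ∪ T) - v i (playerSlice i (univ.image s) \ T) ≤
      α * ∑ t ∈ univ.filter (fun t => (s t).2 ∈ T),
        marginal (welfare v) (s t) (prefixSet s t) := by
  set B := playerSlice i (univ.image s) \ T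
  set T' := univ.filter fun t => (s t).2 ∈ T
  set f : Finset (Fin k) → ℝ := fun A => v i (B ∪ A.image fun t => (s t).2)
  have himage : (T'.image fun t => (s t).2) = T := by
    ext j
    refine ⟨fun hj => ?_, fun hj => ?_⟩
    · obtain ⟨t, ht, rfl⟩ := mem_image.mp hj
      exact (mem_filter.mp ht).2
    · obtain ⟨t, rfl⟩ := hcover j
      exact mem_image_of_mem _ (mem_filter.mpr ⟨mem_univ t, hj⟩)
  have hstep : ∀ t ∈ T', marginal f t (T'.filter (· < t)) ≤
      α * marginal (welfare v) (s t) (prefixSet s t) := by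
    intro t ht
    have hnew : (s t).2 ∉ B ∪ (T'.filter (· < t)).image fun u => (s u).2 := by
      simp only [B, mem_union, mem_sdiff, mem_image, mem_filter, not_or, not_and, not_not,
        not_exists]
      exact ⟨fun _ => (mem_filter.mp ht).2, fun u ⟨_, hut⟩ h => hut.ne (hsnd h)⟩
    calc marginal f t (T'.filter (· < t))
        = marginal (v i) (s t).2 (B ∪ (T'.filter (· < t)).image fun u => (s u).2) := by
          simp only [marginal, f, image_insert, union_insert]
      _ ≤ α * marginal (v i) (s t).2 (playerSlice i (prefixSet s t)) :=
          hsub _ _ (playerSlice_prefixSet_subset i T t) _ hnew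
      _ ≤ α * marginal (welfare v) (s t) (prefixSet s t) :=
          mul_le_mul_of_nonneg_left (marginal_le_greedy v hsnd hgIndep hgMax t i) hα
  calc v i (B ∪ T) - v i B = f T' - f ∅ := by simp only [f, himage, image_empty, union_empty]
    _ = ∑ t ∈ T', marginal f t (T'.filter (· < t)) := sub_empty_eq_sum_marginal f T'
    _ ≤ ∑ t ∈ T', α * marginal (welfare v) (s t) (prefixSet s t) := sum_le_sum hstep
    _ = _ := (mul_sum _ _ _).symm

theorem sum_sum_le_of_greedy [Fintype N] {α ε : ℝ} (hα : 0 ≤ α) (hε : 0 ≤ ε)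
    (v : N → Finset M → ℝ) (hmono : ∀ i S T, S ⊆ T → v i S ≤ v i T)
    (hsub : ∀ i (S T : Finset M), S ⊆ T → ∀ j ∉ T, marginal (v i) j T ≤ α * marginal (v i) j S)
    {c : N → ℝ} {l : N → M → ℝ} (hl : ∀ i j, 0 ≤ l i j)
    (hclose : ∀ i S, c i + ∑ j ∈ S, l i j ≤ v i S ∧ v i S ≤ (1 + ε) * (c i + ∑ j ∈ S, l i j))
    (hsinj : Function.Injective s)
    (hgIndep : ∀ t, PartitionIndep (insert (s t) (prefixSet s t)))
    (hgMax : ∀ t q, q ∉ prefixSet s t → PartitionIndep (insert q (prefixSet s t)) →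
      marginal (welfare v) q (prefixSet s t) ≤ marginal (welfare v) (s t) (prefixSet s t))
    (hSmax : ∀ q, q ∉ univ.image s → ¬ PartitionIndep (insert q (univ.image s)))
    (T : N → Finset M) (hT : ∀ i i', i ≠ i' → Disjoint (T i) (T i')) :
    ∑ i, ∑ j ∈ T i, l i j ≤
      α * (welfare v (univ.image s) - welfare v ∅) + ε * welfare v (univ.image s) := by
  have hsnd := snd_injective_of_greedy hsinj hgIndep
  set δ := fun t => marginal (welfare v) (s t) (prefixSet s t)
  have hδ_nonneg : ∀ t, 0 ≤ δ t := fun t => by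
    change 0 ≤ marginal (welfare v) (s t) (prefixSet s t)
    rw [marginal_welfare]
    exact sub_nonneg.mpr (hmono _ _ _ (subset_insert _ _))
  have hplayer : ∀ i, ∑ j ∈ T i, l i j ≤ α * ∑ t ∈ univ.filter (fun t => (s t).2 ∈ T i), δ t +
      ε * v i (playerSlice i (univ.image s)) := fun i =>
    (sum_le_sub_add_of_close hε (hl i) (hclose i) sdiff_subset sdiff_disjoint).trans <|
      add_le_add_left (marginal_union_le_sum_greedy v hsnd hgIndep hgMax
        (exists_snd_eq_of_maximal hsnd hSmax i) i hα (hsub i) (T i)) _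
  calc ∑ i, ∑ j ∈ T i, l i j
      ≤ α * ∑ i, ∑ t ∈ univ.filter (fun t => (s t).2 ∈ T i), δ t +
          ε * welfare v (univ.image s) := by
        rw [welfare, mul_sum, mul_sum, ← sum_add_distrib]
        exact sum_le_sum fun i _ => hplayer i
    _ ≤ α * ∑ t, δ t + ε * welfare v (univ.image s) := by
        gcongr
        exact sum_sum_filter_le_sum δ hδ_nonneg _ T hT
    _ = α * (welfare v (univ.image s) - welfare v ∅) + ε * welfare v (univ.image s) := by
        rw [sub_empty_eq_sum_marginal_prefixSet]

end Greedy

theorem greedy_allocation_welfare_general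
    {N M : Type*} [Fintype N] [DecidableEq N] [DecidableEq M]
    (α ε : ℝ) (hα : 1 ≤ α) (hε : 0 ≤ ε)
    (v : N → Finset M → ℝ)
    (hv : ∀ (i : N) (S : Finset M), 0 ≤ v i S)
    (hmono : ∀ (i : N) (S T : Finset M), S ⊆ T → v i S ≤ v i T)
    (hsub : ∀ (i : N) (S T : Finset M), S ⊆ T → ∀ j : M, j ∉ T →
      α * (v i (insert j S) - v i S) ≥ v i (insert j T) - v i T)
    (c : N → ℝ) (hc : ∀ i, 0 ≤ c i)
    (l : N → M → ℝ) (hl : ∀ i j, 0 ≤ l i j)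
    (ℓ : N → Finset M → ℝ)
    (hℓ : ∀ (i : N) (S : Finset M), ℓ i S = c i + ∑ j ∈ S, l i j)
    (hclose : ∀ (i : N) (S : Finset M), ℓ i S ≤ v i S ∧ v i S ≤ (1 + ε) * ℓ i S)
    (V : Finset (N × M) → ℝ)
    (hV : ∀ S : Finset (N × M), V S = ∑ i : N, v i (playerSlice i S))
    -- the greedily built basis S = {s_1, …, s_k} of the partition matroid
    (k : ℕ) (s : Fin k → N × M) (hsinj : Function.Injective s)
    (S : Finset (N × M)) (hS : S = Finset.univ.image s)
    (hgIndep : ∀ j : Fin k, PartitionIndep (insert (s j) (prefixSet s j)))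
    (hgMax : ∀ j : Fin k, ∀ q : N × M, q ∉ prefixSet s j →
      PartitionIndep (insert q (prefixSet s j)) →
      V (insert (s j) (prefixSet s j)) - V (prefixSet s j) ≥
        V (insert q (prefixSet s j)) - V (prefixSet s j))
    (hSmax : ∀ q : N × M, q ∉ S → ¬ PartitionIndep (insert q S)) :
    -- the induced allocation is ((1-3ε)/α)-approximately optimal
    ∀ T : N → Finset M, (∀ i i' : N, i ≠ i' → Disjoint (T i) (T i')) →
      ∑ i : N, v i (playerSlice i S) ≥ ((1 - 3 * ε) / α) * ∑ i : N, v i (T i) := by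
  intro T hT
  obtain rfl : ℓ = fun i S => c i + ∑ j ∈ S, l i j := funext fun i => funext (hℓ i)
  obtain rfl : V = welfare v := funext hV
  subst hS
  have hα₀ : 0 ≤ α := by linarith
  have hlinear := sum_sum_le_of_greedy hα₀ hε v hmono hsub hl hclose hsinj hgIndep hgMax
    hSmax T hT
  have hempty : ∑ i, c i ≤ welfare v ∅ :=
    sum_le_sum fun i _ => by simpa [playerSlice] using (hclose i ∅).1
  have hopt : ∑ i, v i (T i) ≤ (1 + ε) * (∑ i, c i + ∑ i, ∑ j ∈ T i, l i j) := by
    rw [← sum_add_distrib, mul_sum]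
    exact sum_le_sum fun i _ => (hclose i (T i)).2
  refine one_sub_three_mul_div_mul_le (W := welfare v (univ.image s)) hα hε
    (sum_nonneg fun i _ => hv _ _) (sum_nonneg fun i _ => hv _ _) (hopt.trans ?_)
  have hc_sum : 0 ≤ ∑ i, c i := sum_nonneg fun i _ => hc i
  rw [mul_assoc]
  gcongr
  linarith [mul_le_mul_of_nonneg_left hempty hα₀, mul_nonneg (sub_nonneg.mpr hα) hc_sum]

/-- Corollary: greedy welfare guarantee.  In a market where
each valuation `v_i` is monotone, `α`-submodular (`α ≥ 1`) and `ε`-close to a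
linear valuation `ℓ_i`, let `S ⊆ N × M` be a basis of the partition matroid
built greedily with respect to `V(S) = Σ_i v_i({j : (i,j) ∈ S})`.  Then the
induced allocation `(S_i)` satisfies `Σ_i v_i(S_i) ≥ ((1−3ε)/α)·OPT`, i.e. its
welfare is at least `((1−3ε)/α)` times the welfare of any allocation. -/
theorem greedy_allocation_welfare
    {N M : Type*} [Fintype N] [Fintype M] [DecidableEq N] [DecidableEq M]
    (α ε : ℝ) (hα : 1 ≤ α) (hε : 0 ≤ ε)
    (v : N → Finset M → ℝ)
    (hv : ∀ (i : N) (S : Finset M), 0 ≤ v i S)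
    (hmono : ∀ (i : N) (S T : Finset M), S ⊆ T → v i S ≤ v i T)
    (hsub : ∀ (i : N) (S T : Finset M), S ⊆ T → ∀ j : M, j ∉ T →
      α * (v i (insert j S) - v i S) ≥ v i (insert j T) - v i T)
    (c : N → ℝ) (hc : ∀ i, 0 ≤ c i)
    (l : N → M → ℝ) (hl : ∀ i j, 0 ≤ l i j)
    (ℓ : N → Finset M → ℝ)
    (hℓ : ∀ (i : N) (S : Finset M), ℓ i S = c i + ∑ j ∈ S, l i j)
    (hclose : ∀ (i : N) (S : Finset M), ℓ i S ≤ v i S ∧ v i S ≤ (1 + ε) * ℓ i S)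
    (V : Finset (N × M) → ℝ)
    (hV : ∀ S : Finset (N × M), V S = ∑ i : N, v i (playerSlice i S))
    -- the greedily built basis S = {s_1, …, s_k} of the partition matroid
    (k : ℕ) (s : Fin k → N × M) (hsinj : Function.Injective s)
    (S : Finset (N × M)) (hS : S = Finset.univ.image s)
    (hgIndep : ∀ j : Fin k, PartitionIndep (insert (s j) (prefixSet s j)))
    (hgMax : ∀ j : Fin k, ∀ q : N × M, q ∉ prefixSet s j →
      PartitionIndep (insert q (prefixSet s j)) →
      V (insert (s j) (prefixSet s j)) - V (prefixSet s j) ≥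
        V (insert q (prefixSet s j)) - V (prefixSet s j))
    (hSmax : ∀ q : N × M, q ∉ S → ¬ PartitionIndep (insert q S)) :
    -- the induced allocation is ((1-3ε)/α)-approximately optimal
    ∀ T : N → Finset M, (∀ i i' : N, i ≠ i' → Disjoint (T i) (T i')) →
      ∑ i : N, v i (playerSlice i S) ≥ ((1 - 3 * ε) / α) * ∑ i : N, v i (T i) :=
  greedy_allocation_welfare_general α ε hα hε v hv hmono hsub c hc l hl ℓ hℓ hclose V hV k s hsinj S
    hS hgIndep hgMax hSmax
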